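/- arXiv:1211.2614 — 3 statements merged into one kernel-verified Lean document; each statement's English description precedes it below -/
import Mathlib

section
/- Let G be a finite group and let H ⊴ G be a normal subgroup such that G/H is isomorphic to C_p × C_p for a prime p. Then d(G) ≤ (d(H)+2)p − 2 ≤ |G|/p + p − 2. -/
/-- The set of all products of the terms of the multiset `S` taken in some order. -/
def prodSet {G : Type*} [Group G] (S : Multiset G) : Set G :=
  {g | ∃ l : List G, (l : Multiset G) = S ∧ l.prod = g}

/-- A sequence (multiset) over `G` is a product-one sequence if its terms can be
ordered so that their product is `1`. -/
def IsProductOne {G : Type*} [Group G] (S : Multiset G) : Prop :=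
  (1 : G) ∈ prodSet S

/-- A minimal product-one sequence (atom): a nontrivial product-one sequence that cannot
be partitioned into two nontrivial product-one subsequences. -/
def IsMinimalProductOne {G : Type*} [Group G] (S : Multiset G) : Prop :=
  S ≠ 0 ∧ IsProductOne S ∧
    ¬ ∃ T₁ T₂ : Multiset G, T₁ ≠ 0 ∧ T₂ ≠ 0 ∧ S = T₁ + T₂ ∧
      IsProductOne T₁ ∧ IsProductOne T₂

/-- The small Davenport constant: the maximal length of a sequence over `G` having
no nontrivial product-one subsequence. -/
noncomputable def smallDavenport (G : Type*) [Group G] : ℕ :=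
  sSup {n | ∃ S : Multiset G, Multiset.card S = n ∧
    ∀ T : Multiset G, T ≤ S → T ≠ 0 → ¬ IsProductOne T}

/-- The large Davenport constant: the maximal length of a minimal product-one sequence. -/
noncomputable def largeDavenport (G : Type*) [Group G] : ℕ :=
  sSup {n | ∃ S : Multiset G, Multiset.card S = n ∧ IsMinimalProductOne S}

/-!
Let `φ : G → C_p × C_p` be the quotient map followed by the isomorphism, so `ker φ = H`.
Chevalley–Warning gives Olson's bound `D(C_p × C_p) = 2p - 1` and, with the extra equation
`∑ 1 = 0`, a nonempty zero-sum subsequence of length `p` or `2p` among any `3p - 2` terms; a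
zero-sum block of length `2p` splits into two by Olson, so there is one of length at most `p`.
Peeling off `d(H)` such short blocks from a sequence of length `(d(H) + 2)p - 1` leaves `2p - 1`
terms, enough for one more block. The products of these `d(H) + 1` disjoint blocks lie in `H`,
so some of them multiply to `1` in some order, and concatenating the corresponding blocks gives
a product-one subsequence. The second inequality is `d(H) < |H|` together with `|G| = p² |H|`.
-/

theorem Multiset.exists_le_card_eq {α : Type*} {s : Multiset α} {n : ℕ} (h : n ≤ card s) :
    ∃ t ≤ s, card t = n := by
  obtain ⟨t, ht⟩ := card_pos_iff_exists_mem.mp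
    (show 0 < card (s.powersetCard n) by simp [Nat.choose_pos h])
  exact ⟨t, mem_powersetCard.mp ht⟩

theorem Multiset.sum_map_eq_zero_of_fst_of_snd {α M N : Type*} [AddCommMonoid M]
    [AddCommMonoid N] {f : α → M × N} {t : Multiset α}
    (h₁ : (t.map fun x ↦ (f x).1).sum = 0)
    (h₂ : (t.map fun x ↦ (f x).2).sum = 0) : (t.map f).sum = 0 := by
  refine Prod.ext ?_ ?_
  · simpa [map_map, h₁] using map_multiset_sum (AddMonoidHom.fst M N) (t.map f)
  · simpa [map_map, h₂] using map_multiset_sum (AddMonoidHom.snd M N) (t.map f)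

theorem Multiset.sum_le_sum_of_le {M : Type*} [AddCommMonoid M] [PartialOrder M]
    [CanonicallyOrderedAdd M] {s t : Multiset M} (h : s ≤ t) : s.sum ≤ t.sum := by
  obtain ⟨u, rfl⟩ := le_iff_exists_add.mp h
  rw [sum_add]
  exact le_self_add

theorem Multiset.exists_coe_le_map_eq {α β : Type*} {f : α → β} {s : Multiset α}
    {l : List β} (h : (l : Multiset β) ≤ s.map f) :
    ∃ l' : List α, (l' : Multiset α) ≤ s ∧ l'.map f = l := by
  obtain ⟨ls, rfl⟩ : ∃ ls : List α, ↑ls = s := ⟨s.toList, s.coe_toList⟩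
  obtain ⟨m, hml, hm⟩ := Multiset.coe_le.mp h
  obtain ⟨m', hm', rfl⟩ := List.sublist_map_iff.mp hm
  obtain ⟨l', rfl, hl'⟩ : ∃ l' : List α, l = l'.map f ∧ l'.Perm m' :=
    (congrFun₂ (List.eq_map_comp_perm f) l m').mpr hml.symm
  exact ⟨l', Multiset.coe_le.mpr (hl'.subperm.trans hm'.subperm), rfl⟩

section ZeroSum

variable {p : ℕ} [Fact p.Prime]

open Finset MvPolynomial in
theorem ZMod.exists_nonempty_forall_sum_eq_zero {κ ι : Type*} [Fintype κ] [Fintype ι]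
    (a : κ → ι → ZMod p) (h : Fintype.card κ * (p - 1) < Fintype.card ι) :
    ∃ t : Finset ι, t.Nonempty ∧ ∀ j, ∑ i ∈ t, a j i = 0 := by
  classical
  let f : κ → MvPolynomial ι (ZMod p) := fun j ↦ ∑ i, a j i • X i ^ (p - 1)
  have hdeg : ∑ j, (f j).totalDegree < Fintype.card ι :=
    calc ∑ j, (f j).totalDegree ≤ ∑ _j : κ, (p - 1) :=
          sum_le_sum fun j _ ↦ totalDegree_finsetSum_le fun i _ ↦
            (totalDegree_smul_le ..).trans (totalDegree_X_pow ..).le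
      _ = Fintype.card κ * (p - 1) := by simp
      _ < Fintype.card ι := h
  let zero_sol : {x : ι → ZMod p // ∀ j, eval x (f j) = 0} :=
    ⟨0, fun j ↦ by simp [f, (Fact.out : p.Prime).one_lt, tsub_eq_zero_iff_le]⟩
  have : Nonempty {x : ι → ZMod p // ∀ j, eval x (f j) = 0} := ⟨zero_sol⟩
  obtain ⟨x, hx⟩ := Fintype.exists_ne_of_one_lt_card ((Fact.out : p.Prime).one_lt.trans_le <|
    Nat.le_of_dvd Fintype.card_pos (char_dvd_card_solutions_of_fintype_sum_lt p hdeg)) zero_sol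
  -- By Fermat, `x i ^ (p - 1)` is the indicator of `x i ≠ 0`.
  refine ⟨({i | x.1 i ≠ 0} : Finset ι), ?_, fun j ↦ ?_⟩
  · rw [← Subtype.coe_ne_coe, Function.ne_iff] at hx
    obtain ⟨i, hi⟩ := hx
    exact ⟨i, by simpa [zero_sol] using hi⟩
  · simpa [f, ZMod.pow_card_sub_one, Finset.sum_filter] using x.2 j

theorem Multiset.exists_le_forall_sum_map_eq_zero {κ α : Type*} [Fintype κ]
    (a : κ → α → ZMod p) (s : Multiset α) (h : Fintype.card κ * (p - 1) < card s) :
    ∃ t ≤ s, t ≠ 0 ∧ ∀ j, (t.map (a j)).sum = 0 := by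
  classical
  obtain ⟨t, ht, hsum⟩ :=
    ZMod.exists_nonempty_forall_sum_eq_zero (fun j (x : s) ↦ a j x) (by rwa [card_coe])
  refine ⟨t.val.map (fun x : s ↦ (x : α)), ?_, ?_, fun j ↦ ?_⟩
  · simpa using
      map_le_map (f := fun x : s ↦ (x : α)) (Finset.val_le_iff.2 (Finset.subset_univ t))
  · rw [Ne, Multiset.map_eq_zero, Finset.val_eq_zero]
    exact ht.ne_empty
  · rw [Multiset.map_map, Finset.sum_map_val]
    exact hsum j

variable {α : Type*} (f : α → ZMod p × ZMod p)

open Multiset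

theorem exists_zero_sum_of_two_mul_sub_one_le {s : Multiset α} (hs : 2 * p - 1 ≤ card s) :
    ∃ t ≤ s, t ≠ 0 ∧ (t.map f).sum = 0 := by
  obtain ⟨t, hts, ht0, hsum⟩ := s.exists_le_forall_sum_map_eq_zero
    ![fun x ↦ (f x).1, fun x ↦ (f x).2]
    (by rw [Fintype.card_fin]; have := (Fact.out : p.Prime).two_le; omega)
  exact ⟨t, hts, ht0, Multiset.sum_map_eq_zero_of_fst_of_snd (hsum 0) (hsum 1)⟩

theorem exists_short_zero_sum_of_card_eq_two_mul {t : Multiset α} (ht : card t = 2 * p)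
    (hsum : (t.map f).sum = 0) : ∃ u ≤ t, u ≠ 0 ∧ card u ≤ p ∧ (u.map f).sum = 0 := by
  classical
  have hp := (Fact.out : p.Prime).two_le
  obtain ⟨a, ha⟩ := Multiset.card_pos_iff_exists_mem.mp (show 0 < card t by omega)
  obtain ⟨u, hu, hu0, husum⟩ := exists_zero_sum_of_two_mul_sub_one_le f
    (s := t.erase a) (by rw [card_erase_of_mem ha, ht, Nat.pred_eq_sub_one])
  have hut : u ≤ t := hu.trans (t.erase_le a)
  have hcard : card u + card (t - u) = 2 * p := by
    rw [Multiset.card_sub hut, ht]; have := Multiset.card_le_card hut; omega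
  -- `u` and its complement `t - u` are both nonempty zero-sum, and one of them is short.
  by_cases hup : card u ≤ p
  · exact ⟨u, hut, hu0, hup, husum⟩
  · refine ⟨t - u, Multiset.sub_le_self t u, ?_, by omega, ?_⟩
    · intro h0
      have := Multiset.card_le_card hu
      rw [card_erase_of_mem ha, ht, Nat.pred_eq_sub_one] at this
      rw [h0, card_zero] at hcard
      omega
    · rw [← add_right_cancel_iff (a := (u.map f).sum), ← Multiset.sum_add,
        ← Multiset.map_add, tsub_add_cancel_of_le hut, hsum, husum, add_zero]

theorem exists_short_zero_sum_of_three_mul_sub_two_le {s : Multiset α}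
    (hs : 3 * p - 2 ≤ card s) :
    ∃ t ≤ s, t ≠ 0 ∧ card t ≤ p ∧ (t.map f).sum = 0 := by
  have hp := (Fact.out : p.Prime).two_le
  obtain ⟨s', hs's, hs'⟩ := Multiset.exists_le_card_eq hs
  -- The constant third coordinate forces `p ∣ card t`, so `card t ∈ {p, 2p}`.
  obtain ⟨t, hts', ht0, hsum⟩ := s'.exists_le_forall_sum_map_eq_zero
    ![fun x ↦ (f x).1, fun x ↦ (f x).2, 1] (by rw [Fintype.card_fin]; omega)
  have hzero : (t.map f).sum = 0 := Multiset.sum_map_eq_zero_of_fst_of_snd (hsum 0) (hsum 1)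
  obtain ⟨c, hc⟩ : p ∣ card t := by
    simpa [ZMod.natCast_eq_zero_iff] using hsum 2
  have hpos : 0 < card t := Multiset.card_pos.mpr ht0
  have hle : card t ≤ 3 * p - 2 := hs' ▸ Multiset.card_le_card hts'
  have hc3 : c < 3 := by
    by_contra! h
    have := Nat.mul_le_mul_left p h
    omega
  obtain rfl | rfl : c = 1 ∨ c = 2 := by
    rcases c with _ | _ | _ | c <;> omega
  · exact ⟨t, hts'.trans hs's, ht0, by omega, hzero⟩
  · obtain ⟨u, hut, hu0, hup, husum⟩ :=
      exists_short_zero_sum_of_card_eq_two_mul f (by rw [hc, mul_comm]) hzero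
    exact ⟨u, hut.trans (hts'.trans hs's), hu0, hup, husum⟩

theorem exists_disjoint_zero_sum_blocks (n : ℕ) {S : Multiset α}
    (hS : (n + 2) * p - 1 ≤ card S) :
    ∃ B : Multiset (Multiset α), card B = n + 1 ∧ B.sum ≤ S ∧
      ∀ b ∈ B, b ≠ 0 ∧ (b.map f).sum = 0 := by
  classical
  induction n generalizing S with
  | zero =>
    obtain ⟨t, htS, ht0, hsum⟩ := exists_zero_sum_of_two_mul_sub_one_le f (by simpa using hS)
    exact ⟨{t}, rfl, by simpa using htS, by simp [ht0, hsum]⟩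
  | succ n ih =>
    have hsplit : (n + 1 + 2) * p = (n + 2) * p + p := by ring
    have h3 := Nat.mul_le_mul_right p (show 3 ≤ n + 1 + 2 by omega)
    obtain ⟨t, htS, ht0, htp, hsum⟩ :=
      exists_short_zero_sum_of_three_mul_sub_two_le f (s := S) (by omega)
    obtain ⟨B, hB, hBS, hBb⟩ := ih (S := S - t) (by rw [card_sub htS]; omega)
    refine ⟨t ::ₘ B, by simp [hB], ?_, by simpa [ht0, hsum] using hBb⟩
    calc (t ::ₘ B).sum = t + B.sum := sum_cons t B
      _ ≤ t + (S - t) := add_le_add_right hBS t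
      _ = S := add_tsub_cancel_of_le htS

end ZeroSum

def IsProductOneFree {G : Type*} [Group G] (S : Multiset G) : Prop :=
  ∀ T ≤ S, T ≠ 0 → ¬ IsProductOne T

section ProductOne

variable {G : Type*} [Group G]

theorem mul_mem_prodSet_add {s t : Multiset G} {x y : G} (hx : x ∈ prodSet s)
    (hy : y ∈ prodSet t) : x * y ∈ prodSet (s + t) := by
  obtain ⟨l, rfl, rfl⟩ := hx
  obtain ⟨m, rfl, rfl⟩ := hy
  exact ⟨l ++ m, rfl, List.prod_append⟩

theorem List.prod_map_mem_prodSet_sum {ι : Type*} {blk : ι → Multiset G} {g : ι → G}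
    (c : List ι) (h : ∀ i ∈ c, g i ∈ prodSet (blk i)) :
    (c.map g).prod ∈ prodSet (c.map blk).sum := by
  induction c with
  | nil => exact ⟨[], rfl, rfl⟩
  | cons i c ih =>
    simp only [List.forall_mem_cons] at h
    simpa using mul_mem_prodSet_add h.1 (ih h.2)

theorem IsProductOneFree.card_lt [Finite G] {S : Multiset G} (hS : IsProductOneFree S) :
    Multiset.card S < Nat.card G := by
  have := Fintype.ofFinite G
  obtain ⟨l, rfl⟩ : ∃ l : List G, ↑l = S := ⟨S.toList, S.coe_toList⟩
  by_contra! hle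
  -- Two of the prefix products of `l` coincide, and the segment between them has product `1`.
  obtain ⟨i, j, hij, heq⟩ := Fintype.exists_ne_map_eq_of_card_lt
    (fun i : Fin (l.length + 1) ↦ (l.take i).prod)
    (by rw [Fintype.card_fin, ← Nat.card_eq_fintype_card, ← Multiset.coe_card]; omega)
  wlog hlt : i < j generalizing i j
  · exact this j i hij.symm heq.symm (lt_of_le_of_ne (not_lt.mp hlt) hij.symm)
  set seg := (l.drop i).take (j - i)
  have htake : l.take j = l.take i ++ seg := by
    rw [← List.take_add, Nat.add_sub_cancel' hlt.le]
  refine hS seg ?_ ?_ ⟨seg, rfl, ?_⟩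
  · exact Multiset.coe_le.mpr ((List.take_sublist _ _).trans (List.drop_sublist _ _)).subperm
  · have := j.is_lt
    simp only [seg, ne_eq, Multiset.coe_eq_zero, List.take_eq_nil_iff, List.drop_eq_nil_iff,
      not_or, not_le]
    omega
  · simpa [htake] using heq

theorem bddAbove_card_isProductOneFree [Finite G] :
    BddAbove {n | ∃ S : Multiset G, Multiset.card S = n ∧ IsProductOneFree S} :=
  ⟨Nat.card G, by rintro n ⟨S, rfl, hS⟩; exact hS.card_lt.le⟩

theorem IsProductOneFree.card_le_smallDavenport [Finite G] {S : Multiset G}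
    (hS : IsProductOneFree S) : Multiset.card S ≤ smallDavenport G :=
  le_csSup bddAbove_card_isProductOneFree ⟨S, rfl, hS⟩

theorem smallDavenport_le {N : ℕ}
    (h : ∀ S : Multiset G, IsProductOneFree S → Multiset.card S ≤ N) :
    smallDavenport G ≤ N :=
  csSup_le' fun _ ⟨S, hn, hS⟩ ↦ hn ▸ h S hS

theorem smallDavenport_lt_card [Finite G] : smallDavenport G < Nat.card G := by
  obtain ⟨S, hS, hfree⟩ := Nat.sSup_mem (s := {n | ∃ S : Multiset G, Multiset.card S = n ∧
    IsProductOneFree S}) ⟨0, 0, rfl, fun _ hT hT0 ↦ (hT0 (Multiset.le_zero.mp hT)).elim⟩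
    bddAbove_card_isProductOneFree
  exact hS.symm.trans_lt hfree.card_lt

theorem exists_isProductOne_of_smallDavenport_lt [Finite G] {S : Multiset G}
    (h : smallDavenport G < Multiset.card S) : ∃ T ≤ S, T ≠ 0 ∧ IsProductOne T := by
  by_contra! hS
  exact h.not_ge (IsProductOneFree.card_le_smallDavenport hS)

theorem exists_isProductOne_le_sum_of_smallDavenport_lt (H : Subgroup G) [Finite H]
    {B : Multiset (Multiset G)} (hB : smallDavenport H < Multiset.card B)
    (hblk : ∀ b ∈ B, b ≠ 0 ∧ ∃ x ∈ H, x ∈ prodSet b) :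
    ∃ T ≤ B.sum, T ≠ 0 ∧ IsProductOne T := by
  choose hne g hgH hg using hblk
  let k : {b // b ∈ B} → H := fun b ↦ ⟨g b.1 b.2, hgH b.1 b.2⟩
  obtain ⟨W, hWB, hW0, w, rfl, hw⟩ :=
    exists_isProductOne_of_smallDavenport_lt (S := B.attach.map k) (by simpa using hB)
  obtain ⟨c, hc, rfl⟩ := Multiset.exists_coe_le_map_eq hWB
  obtain ⟨b, hb⟩ : ∃ b, b ∈ c := c.exists_mem_of_ne_nil (by rintro rfl; exact hW0 rfl)
  refine ⟨(c.map Subtype.val).sum, ?_, ?_, ?_⟩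
  · calc (c.map Subtype.val).sum = ((c : Multiset _).map Subtype.val).sum := by simp
      _ ≤ (B.attach.map Subtype.val).sum := Multiset.sum_le_sum_of_le (Multiset.map_le_map hc)
      _ = B.sum := by rw [Multiset.attach_map_val]
  · exact fun h0 ↦
      hne b.1 b.2 (le_zero_iff.mp (h0 ▸ List.le_sum_of_mem (List.mem_map_of_mem hb)))
  · have hprod : (c.map fun b ↦ (k b : G)).prod = 1 := by
      simpa [Subgroup.val_list_prod, Function.comp_def] using congrArg Subtype.val hw
    have := List.prod_map_mem_prodSet_sum (blk := Subtype.val) (g := fun b ↦ (k b : G)) c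
      fun b _ ↦ hg b.1 b.2
    rwa [hprod] at this

end ProductOne

theorem IsProductOneFree.card_le_of_ker_le {G : Type*} [Group G] {p : ℕ} [Fact p.Prime]
    (H : Subgroup G) [Finite H] (φ : G →* Multiplicative (ZMod p × ZMod p)) (hφ : φ.ker ≤ H)
    {S : Multiset G} (hS : IsProductOneFree S) :
    Multiset.card S ≤ (smallDavenport H + 2) * p - 2 := by
  by_contra! hlt
  obtain ⟨B, hB, hBS, hBb⟩ :=
    exists_disjoint_zero_sum_blocks (fun x ↦ (φ x).toAdd) (smallDavenport H) (S := S) (by omega)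
  have hBH : ∀ b ∈ B, b.toList.prod ∈ H := fun b hb ↦ hφ <| by
    have := (hBb b hb).2
    rw [← b.coe_toList, Multiset.map_coe, Multiset.sum_coe] at this
    rwa [MonoidHom.mem_ker, map_list_prod, ← toAdd_eq_zero, toAdd_list_sum, List.map_map]
  obtain ⟨T, hTB, hT0, hT⟩ := exists_isProductOne_le_sum_of_smallDavenport_lt H (B := B)
    (by omega) fun b hb ↦ ⟨(hBb b hb).1, _, hBH b hb, b.toList, b.coe_toList, rfl⟩
  exact hS T (hTB.trans hBS) hT0 hT

theorem stmt2 (G : Type*) [Group G] [Finite G] (p : ℕ) (hp : p.Prime)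
    (H : Subgroup G) (hH : H.Normal)
    (hquot : Nonempty ((G ⧸ H) ≃*
      (Multiplicative (ZMod p) × Multiplicative (ZMod p)))) :
    smallDavenport G ≤ (smallDavenport H + 2) * p - 2 ∧
      (smallDavenport H + 2) * p - 2 ≤ Nat.card G / p + p - 2 := by
  have := Fact.mk hp
  obtain ⟨e⟩ := hquot
  let φ : G →* Multiplicative (ZMod p × ZMod p) :=
    ((MulEquiv.prodMultiplicative _ _).symm.toMonoidHom.comp e.toMonoidHom).comp
      (QuotientGroup.mk' H)
  have hker : φ.ker ≤ H := fun x hx ↦ by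
    rw [← QuotientGroup.eq_one_iff, ← e.map_eq_one_iff]
    exact (MulEquiv.prodMultiplicative _ _).symm.map_eq_one_iff.mp (φ.mem_ker.mp hx)
  refine ⟨smallDavenport_le fun S hS ↦ hS.card_le_of_ker_le H φ hker, ?_⟩
  have hcard : Nat.card G = p * p * Nat.card H := by
    rw [Subgroup.card_eq_card_quotient_mul_card_subgroup H, Nat.card_congr e.toEquiv,
      Nat.card_prod, Nat.card_congr Multiplicative.toAdd, Nat.card_zmod]
  have hd : smallDavenport H + 1 ≤ Nat.card H := smallDavenport_lt_card
  rw [hcard, mul_assoc, Nat.mul_div_cancel_left _ hp.pos]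
  have := Nat.mul_le_mul_left p hd
  have : (smallDavenport H + 2) * p = p * (smallDavenport H + 1) + p := by ring
  omega
end

section
/- Let p and q be primes with p dividing q−1, let G be a finite non-abelian group of order pq with commutator subgroup G' = [G,G] (so |G'| = q), let S be a sequence over G all of whose terms lie in G' \ {1}, and let x ∈ G \ G'. Then |π(x·S)| ≥ min{q, |S| + 1}, where x·S denotes the sequence S with the term x adjoined. -/
/-!
A subgroup of order `q` has index `p`, the smallest prime divisor of `p q`, so it is normal with
cyclic quotient and contains `G'`; as `G` is non-abelian, `G'` is that subgroup, cyclic of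
order `q`. If `x ∉ G'` centralized a nontrivial element of `G'`, it would centralize all of `G'`,
so the centralizer of `G'` would properly contain `G'`, hence be `G` as `[G : G']` is prime; then
`G'` is central with cyclic quotient and `G` is abelian.

Induct on `S`. Let `P = π(x T)`; it lies in the coset `x G'`, on which right multiplication by
`a ∈ G'` agrees with left multiplication by `x a x⁻¹ ≠ a`, because `G'` is abelian. Hence
`π(x a T)` contains the two translates `a P` and `(x a x⁻¹) P` of `P`. If they differ,
`|π(x a T)| > |P|`; if they coincide, `P` is invariant under the nontrivial element
`a⁻¹ x a x⁻¹` of `G'`, which generates `G'`, so `P` is a union of `G'`-orbits and `|P| ≥ q`.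
-/

open Pointwise

theorem Nat.minFac_mul_of_prime_of_lt {p q : ℕ} (hp : p.Prime) (hq : q.Prime) (hpq : p < q) :
    (p * q).minFac = p := by
  have hr := Nat.minFac_prime (n := p * q) fun h => hp.ne_one (Nat.eq_one_of_mul_eq_one_right h)
  refine le_antisymm (Nat.minFac_le_of_dvd hp.two_le (dvd_mul_right p q)) ?_
  rcases hr.dvd_mul.mp (Nat.minFac_dvd _) with h | h
  · exact ((Nat.prime_dvd_prime_iff_eq hr hp).mp h).ge
  · rw [(Nat.prime_dvd_prime_iff_eq hr hq).mp h]
    exact hpq.le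

namespace Subgroup

variable {G : Type*} [Group G] {N : Subgroup G}

theorem index_eq_of_card_eq_mul {p q : ℕ} (hq : 0 < q) (hG : Nat.card G = p * q)
    (hN : Nat.card N = q) : N.index = p := by
  have := N.card_mul_index
  rw [hN, hG, mul_comm] at this
  exact Nat.eq_of_mul_eq_mul_right hq this

theorem zpowers_eq_of_prime_card (hN : (Nat.card N).Prime) {d : G} (hd : d ∈ N) (hd1 : d ≠ 1) :
    zpowers d = N := by
  have : Fact (Nat.card N).Prime := ⟨hN⟩
  have h := zpowers_eq_top_of_prime_card (G := N) rfl (g := ⟨d, hd⟩) (by simpa using hd1)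
  simpa [MonoidHom.map_zpowers, ← MonoidHom.range_eq_map] using congrArg (map N.subtype) h

theorem mem_centralizer_of_commute_of_prime_card (hN : (Nat.card N).Prime) {a x : G} (ha : a ∈ N)
    (ha1 : a ≠ 1) (h : Commute x a) : x ∈ centralizer N := by
  rw [← zpowers_eq_of_prime_card hN ha ha1, zpowers_eq_closure, centralizer_closure,
    mem_centralizer_singleton_iff]
  exact h.eq

theorem card_le_ncard_of_smul_eq_self (hN : (Nat.card N).Prime) {d : G} (hd : d ∈ N) (hd1 : d ≠ 1)
    {P : Set G} (hP : P.Finite) (hne : P.Nonempty) (hdP : d • P = P) : Nat.card N ≤ P.ncard := by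
  have hstab : N ≤ MulAction.stabilizer G P := by
    rw [← zpowers_eq_of_prime_card hN hd hd1, zpowers_le]
    exact hdP
  obtain ⟨g, hg⟩ := hne
  have : Finite P := hP
  rw [← Nat.card_coe_set_eq]
  refine Nat.card_le_card_of_injective (fun n => ⟨(n : G) * g, ?_⟩) fun m n h => ?_
  · rw [← MulAction.mem_stabilizer_iff.mp (hstab n.2)]
    exact Set.smul_mem_smul_set hg
  · exact Subtype.ext (mul_right_cancel (congrArg Subtype.val h))

end Subgroup

theorem Set.ncard_lt_ncard_union_of_ne {α : Type*} {A B : Set α} (hA : A.Finite) (hB : B.Finite)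
    (hAB : A.ncard = B.ncard) (hne : A ≠ B) : A.ncard < (A ∪ B).ncard := by
  by_contra! h
  have hunion : A = A ∪ B := eq_of_subset_of_ncard_le subset_union_left h (hA.union hB)
  exact hne (eq_of_subset_of_ncard_le (subset_union_right.trans hunion.symm.subset) hAB.le hA).symm

section prodSet

variable {G : Type*} [Group G]

theorem prodSet_nonempty (S : Multiset G) : (prodSet S).Nonempty :=
  ⟨S.toList.prod, S.toList, by simp, rfl⟩

theorem prodSet_finite (S : Multiset G) : (prodSet S).Finite := by
  refine (S.toList.permutations.map List.prod).finite_toSet.subset ?_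
  rintro _ ⟨l, hl, rfl⟩
  refine List.mem_map.mpr ⟨l, List.mem_permutations.mpr ?_, rfl⟩
  rw [← Multiset.coe_eq_coe, hl, Multiset.coe_toList]

theorem smul_prodSet_subset (a : G) (S : Multiset G) : a • prodSet S ⊆ prodSet (a ::ₘ S) := by
  rintro _ ⟨_, ⟨l, rfl, rfl⟩, rfl⟩
  exact ⟨a :: l, rfl, List.prod_cons⟩

theorem op_smul_prodSet_subset (a : G) (S : Multiset G) :
    MulOpposite.op a • prodSet S ⊆ prodSet (a ::ₘ S) := by
  rintro _ ⟨_, ⟨l, rfl, rfl⟩, rfl⟩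
  refine ⟨l ++ [a], ?_, by simp⟩
  rw [← Multiset.coe_add, add_comm]
  rfl

theorem map_eq_prod_map_of_mem_prodSet {A : Type*} [CommGroup A] (f : G →* A) {S : Multiset G}
    {g : G} (hg : g ∈ prodSet S) : f g = (S.map f).prod := by
  obtain ⟨l, rfl, rfl⟩ := hg
  simp [map_list_prod]

end prodSet

section CommutatorSubgroup

variable {G : Type*} [Group G]

theorem inv_mul_mem_commutator_of_mem_prodSet_cons {x g : G} {T : Multiset G}
    (hT : ∀ t ∈ T, t ∈ commutator G) (hg : g ∈ prodSet (x ::ₘ T)) : x⁻¹ * g ∈ commutator G := by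
  have hTmap : (T.map Abelianization.of).prod = 1 :=
    Multiset.prod_eq_one fun _ h => by
      obtain ⟨t, ht, rfl⟩ := Multiset.mem_map.mp h
      exact (QuotientGroup.eq_one_iff t).mpr (hT t ht)
  have hgx : Abelianization.of g = Abelianization.of x := by
    rw [map_eq_prod_map_of_mem_prodSet _ hg, Multiset.map_cons, Multiset.prod_cons, hTmap, mul_one]
  rw [← Abelianization.ker_of, MonoidHom.mem_ker, map_mul, map_inv, hgx, inv_mul_cancel]

theorem min_le_ncard_prodSet_cons_cons (hN : (Nat.card (commutator G)).Prime) {x : G}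
    (hx : x ∉ Subgroup.centralizer (commutator G : Set G)) {T : Multiset G}
    (hT : ∀ t ∈ T, t ∈ commutator G) {a : G} (ha : a ∈ commutator G) (ha1 : a ≠ 1) :
    min (Nat.card (commutator G)) ((prodSet (x ::ₘ T)).ncard + 1) ≤
      (prodSet (x ::ₘ a ::ₘ T)).ncard := by
  rw [Multiset.cons_swap]
  set N := commutator G
  set P := prodSet (x ::ₘ T)
  have : Fact (Nat.card N).Prime := ⟨hN⟩
  have : IsCyclic N := isCyclic_of_prime_card rfl
  have hba : x * a * x⁻¹ ≠ a := fun h =>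
    hx (Subgroup.mem_centralizer_of_commute_of_prime_card hN ha ha1 (mul_inv_eq_iff_eq_mul.mp h))
  have haP : a • P ⊆ prodSet (a ::ₘ x ::ₘ T) := smul_prodSet_subset a _
  -- on the coset `x N ⊇ P`, right multiplication by `a` is left multiplication by `x a x⁻¹`
  have hbP : (x * a * x⁻¹) • P ⊆ prodSet (a ::ₘ x ::ₘ T) := by
    rintro _ ⟨g, hg, rfl⟩
    have hca : a * (x⁻¹ * g) = (x⁻¹ * g) * a := Subgroup.mem_centralizer_iff.mp
      (Subgroup.le_centralizer N (inv_mul_mem_commutator_of_mem_prodSet_cons hT hg)) a ha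
    have hconj : (x * a * x⁻¹) • g = MulOpposite.op a • g := by
      calc x * a * x⁻¹ * g = x * (a * (x⁻¹ * g)) := by group
        _ = x * ((x⁻¹ * g) * a) := by rw [hca]
        _ = g * a := by group
    simp only [hconj]
    exact op_smul_prodSet_subset a _ (Set.smul_mem_smul_set hg)
  by_cases hab : a • P = (x * a * x⁻¹) • P
  · have hd : (a⁻¹ * (x * a * x⁻¹)) • P = P := by rw [mul_smul, ← hab, inv_smul_smul]
    have hdN : a⁻¹ * (x * a * x⁻¹) ∈ N :=
      N.mul_mem (N.inv_mem ha) ((inferInstance : N.Normal).conj_mem a ha x)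
    have hd1 : a⁻¹ * (x * a * x⁻¹) ≠ 1 := fun h => hba (inv_mul_eq_one.mp h).symm
    calc _ ≤ Nat.card N := min_le_left _ _
      _ ≤ P.ncard := Subgroup.card_le_ncard_of_smul_eq_self hN hdN hd1 (prodSet_finite _)
          (prodSet_nonempty _) hd
      _ = (a • P).ncard := (Set.ncard_smul_set a P).symm
      _ ≤ _ := Set.ncard_le_ncard haP (prodSet_finite _)
  · have hfin : P.Finite := prodSet_finite _
    calc _ ≤ P.ncard + 1 := min_le_right _ _
      _ = (a • P).ncard + 1 := by rw [Set.ncard_smul_set]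
      _ ≤ (a • P ∪ (x * a * x⁻¹) • P).ncard :=
          Set.ncard_lt_ncard_union_of_ne hfin.smul_set hfin.smul_set
            (by rw [Set.ncard_smul_set, Set.ncard_smul_set]) hab
      _ ≤ _ := Set.ncard_le_ncard (Set.union_subset haP hbP) (prodSet_finite _)

theorem min_le_ncard_prodSet_cons (hN : (Nat.card (commutator G)).Prime) {x : G}
    (hx : x ∉ Subgroup.centralizer (commutator G : Set G)) {S : Multiset G}
    (hS : ∀ g ∈ S, g ∈ commutator G ∧ g ≠ 1) :
    min (Nat.card (commutator G)) (Multiset.card S + 1) ≤ (prodSet (x ::ₘ S)).ncard := by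
  induction S using Multiset.induction_on with
  | empty =>
    exact (min_le_right _ _).trans ((Set.ncard_pos (prodSet_finite _)).mpr (prodSet_nonempty _))
  | cons a T ih =>
    have hT : ∀ t ∈ T, t ∈ commutator G ∧ t ≠ 1 := fun t ht => hS t (Multiset.mem_cons_of_mem ht)
    obtain ⟨ha, ha1⟩ := hS a (Multiset.mem_cons_self a T)
    have hstep := min_le_ncard_prodSet_cons_cons hN hx (fun t ht => (hT t ht).1) ha ha1
    have := ih hT
    rw [Multiset.card_cons]
    omega

theorem card_commutator_eq_of_card_eq_mul {p q : ℕ} (hp : p.Prime) (hq : q.Prime) (hpq : p < q)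
    (hG : Nat.card G = p * q) (hna : ¬ ∀ a b : G, a * b = b * a) :
    Nat.card (commutator G) = q := by
  have : Fact q.Prime := ⟨hq⟩
  have : Fact p.Prime := ⟨hp⟩
  have : Finite G := Nat.finite_of_card_ne_zero (hG ▸ mul_ne_zero hp.ne_zero hq.ne_zero)
  obtain ⟨g, hg⟩ := exists_prime_orderOf_dvd_card' (G := G) q (hG ▸ dvd_mul_left q p)
  set Q := Subgroup.zpowers g
  have hQ : Nat.card Q = q := by rw [Nat.card_zpowers, hg]
  have hQidx : Q.index = p := Q.index_eq_of_card_eq_mul hq.pos hG hQ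
  have : Q.Normal := Subgroup.normal_of_index_eq_minFac_card
    (by rw [hQidx, hG, Nat.minFac_mul_of_prime_of_lt hp hq hpq])
  have : IsCyclic (G ⧸ Q) := isCyclic_of_prime_card (hQidx ▸ Q.index_eq_card.symm)
  have hle : commutator G ≤ Q :=
    Subgroup.Normal.quotient_commutative_iff_commutator_le.mp inferInstance
  rcases (Nat.dvd_prime hq).mp (hQ ▸ Subgroup.card_dvd_of_le hle) with h | h
  · have := (commutator_eq_bot_iff G).mp (Subgroup.card_eq_one.mp h)
    exact absurd this.is_comm.comm hna
  · exact h

theorem isMulCommutative_of_mem_centralizer_commutator [IsMulCommutative (commutator G)]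
    (hidx : (commutator G).index.Prime) {x : G}
    (hxC : x ∈ Subgroup.centralizer (commutator G : Set G)) (hx : x ∉ commutator G) :
    IsMulCommutative G := by
  have : Fact (commutator G).index.Prime := ⟨hidx⟩
  have : (commutator G).FiniteIndex := ⟨hidx.ne_zero⟩
  have hlt : commutator G < Subgroup.centralizer (commutator G) :=
    lt_of_le_of_ne (Subgroup.le_centralizer _) fun h => hx (h ▸ hxC)
  have htop : Subgroup.centralizer (commutator G : Set G) = ⊤ := by
    rcases (Nat.dvd_prime hidx).mp (Subgroup.index_dvd_of_le hlt.le) with h | h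
    · exact Subgroup.index_eq_one.mp h
    · exact absurd h (Subgroup.index_strictAnti hlt).ne
  have : IsCyclic (Abelianization G) := isCyclic_of_prime_card (p := (commutator G).index) rfl
  refine Abelianization.of.isMulCommutative_of_isCyclic_of_ker_le_center ?_
  rw [Abelianization.ker_of]
  exact Subgroup.centralizer_eq_top_iff_subset.mp htop

end CommutatorSubgroup

theorem stmt8_general (p q : ℕ) (hp : p.Prime) (hq : q.Prime) (hpq : p ∣ q - 1)
    (G : Type*) [Group G] (hG : Nat.card G = p * q)
    (hna : ¬ ∀ a b : G, a * b = b * a)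
    (S : Multiset G) (hS : ∀ g ∈ S, g ∈ commutator G ∧ g ≠ 1)
    (x : G) (hx : x ∉ commutator G) :
    min q (Multiset.card S + 1) ≤ (prodSet (x ::ₘ S)).ncard := by
  have hpq_lt : p < q := by
    have := Nat.le_of_dvd (Nat.sub_pos_of_lt hq.one_lt) hpq
    have := hq.one_lt
    omega
  have hcard : Nat.card (commutator G) = q := card_commutator_eq_of_card_eq_mul hp hq hpq_lt hG hna
  have hidx : (commutator G).index = p := (commutator G).index_eq_of_card_eq_mul hq.pos hG hcard
  have : Fact q.Prime := ⟨hq⟩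
  have : IsCyclic (commutator G) := isCyclic_of_prime_card hcard
  have hxC : x ∉ Subgroup.centralizer (commutator G) := fun hxC =>
    hna (isMulCommutative_of_mem_centralizer_commutator (hidx ▸ hp) hxC hx).is_comm.comm
  simpa only [hcard] using min_le_ncard_prodSet_cons (hcard ▸ hq) hxC hS

theorem stmt8 (p q : ℕ) (hp : p.Prime) (hq : q.Prime) (hpq : p ∣ q - 1)
    (G : Type*) [Group G] [Finite G] (hG : Nat.card G = p * q)
    (hna : ¬ ∀ a b : G, a * b = b * a)
    (S : Multiset G) (hS : ∀ g ∈ S, g ∈ commutator G ∧ g ≠ 1)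
    (x : G) (hx : x ∉ commutator G) :
    min q (Multiset.card S + 1) ≤ (prodSet (x ::ₘ S)).ncard :=
  stmt8_general p q hp hq hpq G hG hna S hS x hx
end

section
/- Let p and q be odd primes with p dividing q−1, let r be an element of the field F_q = Z/qZ of multiplicative order p, and let A ⊆ F_q be a subset which is a union of sets of the form {0} and g·{1, r, r², …, r^{p−1}} with g ∈ F_q \ {0}. If 2 ≤ |A| ≤ q − 2, then A is not an arithmetic progression, i.e. there exist no a ∈ F_q and d ∈ F_q \ {0} with A = {a, a+d, a+2d, …, a+(|A|−1)d}. -/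
/-! The set `A` is stable under `x ↦ r * x`, so for `k = 1, 2` its power sum `∑ x ∈ A, x ^ k` is
fixed by multiplication with `r ^ k ≠ 1` and hence vanishes. For an arithmetic progression of
length `n` and difference `d`, however, `n · ∑ x² − (∑ x)²` equals `n² (n² − 1) d² / 12`, which is
nonzero in `F_q` when `2 ≤ n ≤ q − 2`. -/

open Finset

lemma mul_mem_setOf_mul_pow {M : Type*} [CommMonoid M] {r g x : M} {p : ℕ} (hr : r ^ p = 1)
    (hx : x ∈ {x | ∃ i : ℕ, i < p ∧ x = g * r ^ i}) :
    r * x ∈ {x | ∃ i : ℕ, i < p ∧ x = g * r ^ i} := by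
  obtain ⟨i, hi, rfl⟩ := hx
  rcases Nat.lt_or_ge (i + 1) p with hlt | hge
  · exact ⟨i + 1, hlt, by rw [mul_left_comm, ← pow_succ']⟩
  · refine ⟨0, by omega, ?_⟩
    rw [show p = i + 1 by omega] at hr
    rw [pow_zero, mul_one, mul_left_comm, ← pow_succ', hr, mul_one]

lemma mul_mem_sUnion_of_orbits {M : Type*} [CommMonoidWithZero M] {r : M} {p : ℕ}
    (hr : r ^ p = 1) {𝒮 : Set (Set M)}
    (h𝒮 : ∀ B ∈ 𝒮, B = {0} ∨ ∃ g : M, B = {x | ∃ i : ℕ, i < p ∧ x = g * r ^ i})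
    {x : M} (hx : x ∈ ⋃₀ 𝒮) : r * x ∈ ⋃₀ 𝒮 := by
  obtain ⟨B, hB, hxB⟩ := hx
  refine ⟨B, hB, ?_⟩
  rcases h𝒮 B hB with rfl | ⟨g, rfl⟩
  · rw [Set.mem_singleton_iff.mp hxB, mul_zero]
    rfl
  · exact mul_mem_setOf_mul_pow hr hxB

lemma Finset.sum_comp_mul_left_of_mapsTo {K M : Type*} [MonoidWithZero K] [IsLeftCancelMulZero K]
    [AddCommMonoid M] {S : Finset K} {r : K} (hr : r ≠ 0) (hS : Set.MapsTo (r * ·) S S)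
    (f : K → M) : ∑ x ∈ S, f (r * x) = ∑ x ∈ S, f x := by
  classical
  have hinj : Set.InjOn (r * ·) S := fun x _ y _ h ↦ mul_left_cancel₀ hr h
  have himage : S.image (r * ·) = S :=
    eq_of_subset_of_card_le (image_subset_iff.mpr hS) (card_image_of_injOn hinj).ge
  conv_rhs => rw [← himage]
  rw [sum_image hinj]

lemma Finset.sum_pow_eq_zero_of_mapsTo {K : Type*} [CommRing K] [IsDomain K] {S : Finset K}
    {r : K} {k : ℕ} (hr : r ≠ 0) (hrk : r ^ k ≠ 1) (hS : Set.MapsTo (r * ·) S S) :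
    ∑ x ∈ S, x ^ k = 0 := by
  have h := sum_comp_mul_left_of_mapsTo hr hS (· ^ k)
  simp only [mul_pow, ← mul_sum] at h
  by_contra hne
  exact hrk ((mul_eq_right₀ hne).mp h)

lemma sum_range_arith_mul_two {R : Type*} [CommRing R] (a d : R) (n : ℕ) :
    2 * ∑ i ∈ range n, (a + i * d) = n * (2 * a + (n - 1) * d) := by
  induction n with
  | zero => simp
  | succ n ih => rw [sum_range_succ, mul_add, ih]; push_cast; ring

lemma sum_range_arith_sq_mul_six {R : Type*} [CommRing R] (a d : R) (n : ℕ) :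
    6 * ∑ i ∈ range n, (a + i * d) ^ 2
      = n * (6 * a ^ 2 + 6 * a * d * (n - 1) + d ^ 2 * (n - 1) * (2 * n - 1)) := by
  induction n with
  | zero => simp
  | succ n ih => rw [sum_range_succ, mul_add, ih]; push_cast; ring

lemma sum_range_arith_variance {R : Type*} [CommRing R] (a d : R) (n : ℕ) :
    12 * (n * ∑ i ∈ range n, (a + i * d) ^ 2 - (∑ i ∈ range n, (a + i * d)) ^ 2)
      = n ^ 2 * (n - 1) * (n + 1) * d ^ 2 := by
  linear_combination 2 * (n : R) * sum_range_arith_sq_mul_six a d n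
    - 3 * (2 * ∑ i ∈ range n, (a + i * d) + n * (2 * a + (n - 1) * d))
      * sum_range_arith_mul_two a d n

lemma ZMod.sum_range_arith_sq_ne_zero {q : ℕ} [Fact q.Prime] {n : ℕ} (hn : 2 ≤ n)
    (hnq : n + 2 ≤ q) {a d : ZMod q} (hd : d ≠ 0) (hsum : ∑ i ∈ range n, (a + i * d) = 0) :
    ∑ i ∈ range n, (a + i * d) ^ 2 ≠ 0 := by
  have hcast (m : ℕ) (hm0 : 0 < m) (hmq : m < q) : (m : ZMod q) ≠ 0 := by
    rw [Ne, ZMod.natCast_eq_zero_iff]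
    exact Nat.not_dvd_of_pos_of_lt hm0 hmq
  have hn0 : (n : ZMod q) ≠ 0 := hcast n (by omega) (by omega)
  have hn_sub_one : (n : ZMod q) - 1 ≠ 0 := by
    simpa [Nat.cast_sub (by omega : 1 ≤ n)] using hcast (n - 1) (by omega) (by omega)
  have hn_add_one : (n : ZMod q) + 1 ≠ 0 := by
    simpa using hcast (n + 1) (by omega) (by omega)
  intro hsq
  have hvar := sum_range_arith_variance a d n
  rw [hsum, hsq, mul_zero, zero_pow two_ne_zero, sub_zero, mul_zero] at hvar
  exact mul_ne_zero (mul_ne_zero (mul_ne_zero (pow_ne_zero 2 hn0) hn_sub_one) hn_add_one)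
    (pow_ne_zero 2 hd) hvar.symm

theorem stmt16_general (p q : ℕ) (hp : p.Prime) (hq : q.Prime) (hpodd : Odd p)
    (r : ZMod q) (hr : orderOf r = p)
    (A : Set (ZMod q))
    (hA : ∃ 𝒮 : Set (Set (ZMod q)), A = ⋃₀ 𝒮 ∧ ∀ B ∈ 𝒮,
      B = {0} ∨ ∃ g : ZMod q, g ≠ 0 ∧ B = {x | ∃ i : ℕ, i < p ∧ x = g * r ^ i})
    (hA2 : 2 ≤ A.ncard) (hA3 : A.ncard ≤ q - 2) :
    ¬ ∃ (a d : ZMod q), d ≠ 0 ∧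
      A = {x | ∃ i : ℕ, i < A.ncard ∧ x = a + (i : ZMod q) * d} := by
  have : Fact q.Prime := ⟨hq⟩
  rintro ⟨a, d, hd, hAP⟩
  set n := A.ncard
  have hrp : r ^ p = 1 := hr ▸ pow_orderOf_eq_one r
  have hr0 : r ≠ 0 := by rintro rfl; simp [zero_pow hp.ne_zero] at hrp
  have hrA : Set.MapsTo (r * ·) A A := by
    obtain ⟨𝒮, rfl, h𝒮⟩ := hA
    exact fun x ↦ mul_mem_sUnion_of_orbits hrp
      fun B hB ↦ (h𝒮 B hB).imp_right fun ⟨g, _, hgB⟩ ↦ ⟨g, hgB⟩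
  set S := (range n).image fun i : ℕ ↦ a + i * d
  have hAS : A = S := by rw [hAP]; ext; simp [S, eq_comm]
  have hinj : Set.InjOn (fun i : ℕ ↦ a + i * d) (range n) := by
    rw [← card_image_iff, card_range, ← Set.ncard_coe_finset, ← hAS]
  have hp3 : 3 ≤ p := by have := hp.two_le; obtain ⟨c, rfl⟩ := hpodd; omega
  have hpowsum (k : ℕ) (hk0 : k ≠ 0) (hkp : k < p) : ∑ i ∈ range n, (a + i * d) ^ k = 0 := by
    rw [← sum_image (f := (· ^ k)) hinj]
    exact sum_pow_eq_zero_of_mapsTo hr0 (pow_ne_one_of_lt_orderOf hk0 (hr ▸ hkp))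
      (hAS ▸ hrA)
  refine ZMod.sum_range_arith_sq_ne_zero hA2 (by omega) hd ?_ (hpowsum 2 two_ne_zero (by omega))
  simpa only [pow_one] using hpowsum 1 one_ne_zero (by omega)

theorem stmt16 (p q : ℕ) (hp : p.Prime) (hq : q.Prime) (hpodd : Odd p)
    (hqodd : Odd q) (hpq : p ∣ q - 1)
    (r : ZMod q) (hr : orderOf r = p)
    (A : Set (ZMod q))
    (hA : ∃ 𝒮 : Set (Set (ZMod q)), A = ⋃₀ 𝒮 ∧ ∀ B ∈ 𝒮,
      B = {0} ∨ ∃ g : ZMod q, g ≠ 0 ∧ B = {x | ∃ i : ℕ, i < p ∧ x = g * r ^ i})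
    (hA2 : 2 ≤ A.ncard) (hA3 : A.ncard ≤ q - 2) :
    ¬ ∃ (a d : ZMod q), d ≠ 0 ∧
      A = {x | ∃ i : ℕ, i < A.ncard ∧ x = a + (i : ZMod q) * d} :=
  stmt16_general p q hp hq hpodd r hr A hA hA2 hA3
end
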